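/- Fix an integer k ≥ 1, an index i with 2 ≤ i ≤ k+1, and integers m_1, …, m_{i−1} ≥ 1. Then λ(R_{(m_1,…,m_{i−1})}) > 1, and for every ε > 0 there exists an integer M ≥ 1 such that for all integers m_i, …, m_{k+1} ≥ M, one has |λ(P_{(m_1,…,m_{k+1})}) − λ(R_{(m_1,…,m_{i−1})})| < ε. In other words, λ(P_{(m_1,…,m_{k+1})}) → λ(R_{(m_1,…,m_{i−1})}) > 1 as m_i, …, m_{k+1} all tend to ∞. -/

import Mathlib

/-!
Write `p = i - 1` and `ℓ = λ(R_p)`. Since `R_p = t g` with `g` monic and `g(0) = ±2`, some root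
of `g` lies outside the unit disc, so `ℓ > 1`.

For `j > p` the recursion `R_j = t^{m_j} (t - 1) R_{j-1} ± 2t R_{j-1}^*` is dominated by its first
term on `|z| ≥ ρ > 1` once `m_j` is large, because `|R_{j-1}^*(z)| ≤ 4^{j-1} |z|^{deg R_{j-1}}`
(an `ℓ¹` bound on the coefficients, uniform in the `m`'s). Hence, wherever
`|R_p(z)| ≥ c |z|^{deg R_p}`,
`|P(z)| ≥ (1 - η)^{k+1-p} |z^{m_{p+1} + ⋯ + m_{k+1}} (z - 1)^{k-p} R_p(z)|`.
Outside the disc of radius `r > ℓ` the right side does not vanish, so `λ(P) ≤ r`. On a circle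
`|z| = ρ` just inside `ℓ` that avoids the roots of `R_p`, Jensen's formula turns the same bound
into an inequality of Mahler measures at radius `ρ`:
`∏_α max(ρ, |α|) ≥ (1 - η)^{k+1-p} ρ^{deg P - 1} |β| > ρ^{deg P}`, where `β` is a root of `R_p`
with `|β| > ρ` and the product runs over the roots `α` of `P`. This forces a root of `P` outside
the circle, so `λ(P) > ρ`.
-/

open Polynomial Filter Topology

noncomputable def Rpoly (m : ℕ → ℕ) : ℕ → Polynomial ℤ
  | 0 => 1
  | 1 => X ^ (m 1 + 1) * (X - 1) - 2 * X
  | (i + 2) => X ^ (m (i + 2)) * (X - 1) * Rpoly m (i + 1)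
      + (-1 : Polynomial ℤ) ^ (i + 2) * (2 * X) * (Rpoly m (i + 1)).reverse

noncomputable def Ppoly (m : ℕ → ℕ) (k : ℕ) : Polynomial ℤ :=
  X ^ (m (k + 1)) * Rpoly m k + (-1 : Polynomial ℤ) ^ (k + 1) * (Rpoly m k).reverse

noncomputable def maxRootAbs (f : Polynomial ℤ) : ℝ :=
  sSup ((fun z : ℂ => ‖z‖) '' {z : ℂ | Polynomial.aeval z f = 0})

namespace Polynomial

lemma Monic.add_of_natDegree_lt {R : Type*} [Semiring R] {f g : R[X]} (hf : f.Monic)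
    (hg : g.natDegree < f.natDegree) : (f + g).Monic ∧ (f + g).natDegree = f.natDegree :=
  ⟨hf.add_of_left (degree_lt_degree hg), natDegree_add_eq_left_of_natDegree_lt hg⟩

lemma monic_X_pow_mul_X_sub_one {R : Type*} [Ring R] [Nontrivial R] (a : ℕ) :
    (X ^ a * (X - 1) : R[X]).Monic ∧ (X ^ a * (X - 1) : R[X]).natDegree = a + 1 := by
  have h : (X - 1 : R[X]).Monic := by simpa using monic_X_sub_C (1 : R)
  refine ⟨(monic_X_pow a).mul h, ?_⟩
  rw [(monic_X_pow a).natDegree_mul h, natDegree_X_pow, show (X - 1 : R[X]).natDegree = 1 by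
    compute_degree!]

variable {R : Type*} [SeminormedRing R]

noncomputable def l1Norm (f : R[X]) : ℝ := f.sum fun _ a => ‖a‖

lemma l1Norm_eq_sum_range {f : R[X]} {N : ℕ} (hN : f.natDegree < N) :
    l1Norm f = ∑ n ∈ Finset.range N, ‖f.coeff n‖ :=
  sum_over_range' f (fun _ => norm_zero) N hN

lemma l1Norm_nonneg (f : R[X]) : 0 ≤ l1Norm f :=
  Finset.sum_nonneg fun _ _ => norm_nonneg _

@[simp] lemma l1Norm_monomial (n : ℕ) (a : R) : l1Norm (monomial n a) = ‖a‖ :=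
  sum_monomial_index a _ norm_zero

lemma l1Norm_add_le (f g : R[X]) : l1Norm (f + g) ≤ l1Norm f + l1Norm g := by
  set N := max f.natDegree g.natDegree + 1
  rw [l1Norm_eq_sum_range (f := f + g) (N := N) ((natDegree_add_le f g).trans_lt (by omega)),
    l1Norm_eq_sum_range (f := f) (N := N) (by omega),
    l1Norm_eq_sum_range (f := g) (N := N) (by omega), ← Finset.sum_add_distrib]
  exact Finset.sum_le_sum fun n _ => by simpa only [coeff_add] using norm_add_le _ _

lemma l1Norm_sum_le {ι : Type*} (s : Finset ι) (f : ι → R[X]) :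
    l1Norm (∑ i ∈ s, f i) ≤ ∑ i ∈ s, l1Norm (f i) :=
  Finset.le_sum_of_subadditive l1Norm (by simp [l1Norm]) l1Norm_add_le s f

lemma l1Norm_mul_le (f g : R[X]) : l1Norm (f * g) ≤ l1Norm f * l1Norm g := by
  rw [mul_eq_sum_sum]
  refine (l1Norm_sum_le _ _).trans ?_
  rw [l1Norm, sum_def, Finset.sum_mul]
  refine Finset.sum_le_sum fun i _ => ?_
  refine (l1Norm_sum_le _ _).trans ?_
  rw [l1Norm, sum_def, Finset.mul_sum]
  exact Finset.sum_le_sum fun j _ => by simpa using norm_mul_le _ _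

@[simp] lemma l1Norm_C (a : R) : l1Norm (C a) = ‖a‖ := by
  rw [← monomial_zero_left, l1Norm_monomial]

@[simp] lemma l1Norm_neg (f : R[X]) : l1Norm (-f) = l1Norm f := by
  simp [l1Norm, sum_def]

lemma l1Norm_reverse (f : R[X]) : l1Norm f.reverse = l1Norm f := by
  rw [l1Norm_eq_sum_range (N := f.natDegree + 1) (f.reverse_natDegree_le.trans_lt (by omega)),
    l1Norm_eq_sum_range (N := f.natDegree + 1) (by omega), ← Finset.sum_range_reflect]
  refine Finset.sum_congr rfl fun n hn => ?_
  rw [Finset.mem_range] at hn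
  rw [coeff_reverse, revAt_le (by omega), Nat.add_sub_cancel,
    Nat.sub_sub_self (Nat.le_of_lt_succ hn)]

variable [NormOneClass R]

@[simp] lemma l1Norm_X_pow (n : ℕ) : l1Norm (X ^ n : R[X]) = 1 := by
  rw [← monomial_one_right_eq_X_pow, l1Norm_monomial, norm_one]

end Polynomial

lemma norm_aeval_le_l1Norm_mul_pow (f : ℤ[X]) {z : ℂ} (hz : 1 ≤ ‖z‖) :
    ‖aeval z f‖ ≤ l1Norm f * ‖z‖ ^ f.natDegree := by
  rw [aeval_eq_sum_range, l1Norm_eq_sum_range (Nat.lt_succ_self _), Finset.sum_mul]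
  refine (norm_sum_le _ _).trans (Finset.sum_le_sum fun n hn => ?_)
  rw [zsmul_eq_mul, norm_mul, norm_pow, Complex.norm_intCast, ← Int.norm_eq_abs]
  exact mul_le_mul_of_nonneg_left
    (pow_le_pow_right₀ hz (Nat.le_of_lt_succ (Finset.mem_range.mp hn))) (norm_nonneg _)

lemma norm_aeval_reverse_le (f : ℤ[X]) {z : ℂ} (hz : 1 ≤ ‖z‖) :
    ‖aeval z f.reverse‖ ≤ l1Norm f * ‖z‖ ^ f.natDegree := by
  calc ‖aeval z f.reverse‖ ≤ l1Norm f.reverse * ‖z‖ ^ f.reverse.natDegree :=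
        norm_aeval_le_l1Norm_mul_pow _ hz
    _ ≤ l1Norm f * ‖z‖ ^ f.natDegree := by
        rw [l1Norm_reverse]
        exact mul_le_mul_of_nonneg_left (pow_le_pow_right₀ hz f.reverse_natDegree_le)
          (l1Norm_nonneg f)

lemma sub_inv_mul_norm_le_norm_sub_one {ρ : ℝ} (hρ : 0 < ρ) {z : ℂ} (hz : ρ ≤ ‖z‖) :
    (1 - ρ⁻¹) * ‖z‖ ≤ ‖z - 1‖ := by
  have : ‖z‖ * ρ⁻¹ ≥ 1 := by rw [ge_iff_le, le_mul_inv_iff₀ hρ, one_mul]; exact hz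
  calc (1 - ρ⁻¹) * ‖z‖ ≤ ‖z‖ - ‖(1 : ℂ)‖ := by rw [norm_one]; nlinarith
    _ ≤ ‖z - 1‖ := norm_sub_norm_le z 1

lemma one_sub_mul_norm_le_norm_add {η : ℝ} {a e : ℂ} (h : ‖e‖ ≤ η * ‖a‖) :
    (1 - η) * ‖a‖ ≤ ‖a + e‖ := by
  have := norm_sub_norm_le a (-e)
  rw [norm_neg, sub_neg_eq_add] at this
  linarith

section roots

variable {f : ℂ[X]} {ρ : ℝ}

lemma pow_mul_norm_le_prod_max_roots {z₀ : ℂ} (hz₀ : z₀ ∈ f.roots) (hρ : 0 ≤ ρ) :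
    ρ ^ (f.natDegree - 1) * ‖z₀‖ ≤ (f.roots.map fun α => max ρ ‖α‖).prod := by
  classical
  have hcard : (f.roots.erase z₀).card = f.natDegree - 1 := by
    rw [Multiset.card_erase_of_mem hz₀, IsAlgClosed.card_roots_eq_natDegree, Nat.pred_eq_sub_one]
  rw [← Multiset.cons_erase hz₀, Multiset.map_cons, Multiset.prod_cons, mul_comm, ← hcard,
    ← Multiset.prod_replicate, ← Multiset.map_const']
  exact mul_le_mul (le_max_right _ _) (Multiset.prod_map_le_prod_map₀ _ _ (fun _ _ => hρ)
    fun _ _ => le_max_left _ _) (Multiset.prod_map_nonneg fun _ _ => hρ)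
    ((norm_nonneg _).trans (le_max_right _ _))

lemma exists_mem_roots_lt_norm (h : ρ ^ f.natDegree < (f.roots.map fun α => max ρ ‖α‖).prod) :
    ∃ α ∈ f.roots, ρ < ‖α‖ := by
  by_contra! H
  rw [Multiset.map_congr rfl fun α hα => max_eq_left (H α hα), Multiset.map_const',
    Multiset.prod_replicate, IsAlgClosed.card_roots_eq_natDegree] at h
  exact lt_irrefl _ h

lemma pow_le_norm_eval_of_roots_le (hf : f.Monic) {L : ℝ} (hroots : ∀ α ∈ f.roots, ‖α‖ ≤ L)
    {z : ℂ} (hz : L ≤ ‖z‖) : (‖z‖ - L) ^ f.natDegree ≤ ‖f.eval z‖ := by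
  rw [(IsAlgClosed.splits f).eval_eq_prod_roots_of_monic hf, ← IsAlgClosed.card_roots_eq_natDegree]
  change _ ≤ (normHom : ℂ →*₀ ℝ) _
  rw [map_multiset_prod, Multiset.map_map, ← Multiset.prod_replicate, ← Multiset.map_const']
  refine Multiset.prod_map_le_prod_map₀ _ _ (fun _ _ => sub_nonneg.2 hz) fun α hα => ?_
  calc ‖z‖ - L ≤ ‖z‖ - ‖α‖ := sub_le_sub_left (hroots α hα) _
    _ ≤ ‖z - α‖ := norm_sub_norm_le z α

end roots

section mahlerMeasureAt

/-- The Mahler measure taken over the circle `‖z‖ = ρ` instead of the unit circle. -/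
noncomputable def mahlerMeasureAt (f : ℂ[X]) (ρ : ℝ) : ℝ := (f.comp (C (ρ : ℂ) * X)).mahlerMeasure

variable {ρ : ℝ}

lemma mahlerMeasureAt_eq_prod_roots {f : ℂ[X]} (hf : f.Monic) (hρ : 0 < ρ) :
    mahlerMeasureAt f ρ = (f.roots.map fun α => max ρ ‖α‖).prod := by
  rw [mahlerMeasureAt, (IsAlgClosed.splits f).eq_prod_roots_of_monic hf, multiset_prod_comp,
    prod_mahlerMeasure_eq_mahlerMeasure_prod, Multiset.map_map, Multiset.map_map,
    roots_multiset_prod_X_sub_C]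
  congr 1
  refine Multiset.map_congr rfl fun α _ => ?_
  rw [Function.comp_apply, Function.comp_apply, sub_comp, X_comp, C_comp, sub_eq_add_neg, ← C_neg,
    mahlerMeasure_C_mul_X_add_C (Complex.ofReal_ne_zero.2 hρ.ne'), norm_neg, Complex.norm_real,
    Real.norm_of_nonneg hρ.le]

lemma mahlerMeasureAt_C_mul (c : ℂ) (f : ℂ[X]) :
    mahlerMeasureAt (C c * f) ρ = ‖c‖ * mahlerMeasureAt f ρ := by
  rw [mahlerMeasureAt, mahlerMeasureAt, mul_comp, C_comp, mahlerMeasure_mul, mahlerMeasure_const]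

lemma mahlerMeasure_le_of_norm_eval_le {f g : ℂ[X]}
    (h : ∀ z : ℂ, ‖z‖ = 1 → f.eval z ≠ 0 ∧ ‖f.eval z‖ ≤ ‖g.eval z‖) :
    f.mahlerMeasure ≤ g.mahlerMeasure := by
  have hf : f ≠ 0 := fun hf => (h 1 norm_one).1 (by rw [hf, eval_zero])
  have hg : g ≠ 0 := fun hg => (h 1 norm_one).1 (by
    simpa [hg] using (h 1 norm_one).2)
  rw [mahlerMeasure, mahlerMeasure, if_pos hf, if_pos hg, Real.exp_le_exp, logMahlerMeasure_def,
    logMahlerMeasure_def]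
  refine Real.circleAverage_mono ((circleIntegrable_def _ _ _).2 f.intervalIntegrable_mahlerMeasure)
    ((circleIntegrable_def _ _ _).2 g.intervalIntegrable_mahlerMeasure) fun z hz => ?_
  rw [abs_one, mem_sphere_zero_iff_norm] at hz
  exact Real.log_le_log (norm_pos_iff.2 (h z hz).1) (h z hz).2

lemma mahlerMeasureAt_le_of_norm_eval_le {f g : ℂ[X]} (hρ : 0 ≤ ρ)
    (h : ∀ z : ℂ, ‖z‖ = ρ → f.eval z ≠ 0 ∧ ‖f.eval z‖ ≤ ‖g.eval z‖) :
    mahlerMeasureAt f ρ ≤ mahlerMeasureAt g ρ := by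
  refine mahlerMeasure_le_of_norm_eval_le fun z hz => ?_
  simp only [eval_comp, eval_mul, eval_C, eval_X]
  exact h _ (by rw [norm_mul, hz, mul_one, Complex.norm_real, Real.norm_of_nonneg hρ])

end mahlerMeasureAt

lemma exists_mem_roots_lt_norm_of_norm_eval_le {P Q : ℂ[X]} (hP : P.Monic) (hQ : Q.Monic)
    (hdeg : P.natDegree = Q.natDegree) {ρ κ : ℝ} (hρ : 0 < ρ) {β : ℂ} (hβ : β ∈ Q.roots)
    (hβρ : ρ < κ * ‖β‖) (h : ∀ z : ℂ, ‖z‖ = ρ → Q.eval z ≠ 0 ∧ κ * ‖Q.eval z‖ ≤ ‖P.eval z‖) :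
    ∃ α ∈ P.roots, ρ < ‖α‖ := by
  have hκ : 0 < κ := pos_of_mul_pos_left (hρ.trans hβρ) (norm_nonneg β)
  have hd : 1 ≤ Q.natDegree := by
    rw [← IsAlgClosed.card_roots_eq_natDegree]; exact Multiset.card_pos_iff_exists_mem.2 ⟨β, hβ⟩
  have hmahler : mahlerMeasureAt (C (κ : ℂ) * Q) ρ ≤ mahlerMeasureAt P ρ :=
    mahlerMeasureAt_le_of_norm_eval_le hρ.le fun z hz => by
      rw [eval_mul, eval_C, norm_mul, Complex.norm_real, Real.norm_of_nonneg hκ.le]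
      exact ⟨mul_ne_zero (Complex.ofReal_ne_zero.2 hκ.ne') (h z hz).1, (h z hz).2⟩
  rw [mahlerMeasureAt_C_mul, Complex.norm_real, Real.norm_of_nonneg hκ.le,
    mahlerMeasureAt_eq_prod_roots hQ hρ, mahlerMeasureAt_eq_prod_roots hP hρ] at hmahler
  refine exists_mem_roots_lt_norm (lt_of_lt_of_le ?_ hmahler)
  calc ρ ^ P.natDegree = ρ ^ (Q.natDegree - 1) * ρ := by
        rw [hdeg, ← pow_succ, Nat.sub_add_cancel hd]
    _ < ρ ^ (Q.natDegree - 1) * (κ * ‖β‖) := by gcongr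
    _ = κ * (ρ ^ (Q.natDegree - 1) * ‖β‖) := by ring
    _ ≤ _ := by gcongr; exact pow_mul_norm_le_prod_max_roots hβ hρ.le

lemma norm_le_maxRootAbs {f : ℤ[X]} (hf : f ≠ 0) {z : ℂ} (hz : aeval z f = 0) :
    ‖z‖ ≤ maxRootAbs f := by
  have hfin : {z : ℂ | aeval z f = 0}.Finite :=
    (f.rootSet_finite ℂ).subset fun w hw => mem_rootSet.2 ⟨hf, hw⟩
  exact le_csSup (hfin.image _).bddAbove ⟨z, hz, rfl⟩

lemma maxRootAbs_le {f : ℤ[X]} {r : ℝ} (hr : 0 ≤ r) (h : ∀ z : ℂ, aeval z f = 0 → ‖z‖ ≤ r) :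
    maxRootAbs f ≤ r :=
  Real.sSup_le (by rintro _ ⟨z, hz, rfl⟩; exact h z hz) hr

lemma exists_root_of_lt_maxRootAbs {f : ℤ[X]} {r : ℝ} (hr : 0 ≤ r) (h : r < maxRootAbs f) :
    ∃ z : ℂ, aeval z f = 0 ∧ r < ‖z‖ := by
  by_contra! H
  exact (maxRootAbs_le hr H).not_gt h

lemma pow_le_norm_aeval_of_maxRootAbs_le {f : ℤ[X]} (hf : f.Monic) {z : ℂ}
    (hz : maxRootAbs f ≤ ‖z‖) : (‖z‖ - maxRootAbs f) ^ f.natDegree ≤ ‖aeval z f‖ := by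
  have h := pow_le_norm_eval_of_roots_le (hf.map (algebraMap ℤ ℂ)) (fun α hα =>
    norm_le_maxRootAbs hf.ne_zero (mem_aroots.1 hα).2) hz
  rwa [hf.natDegree_map, eval_map_algebraMap] at h

lemma exists_mem_Ioo_forall_norm_eq_aeval_ne_zero {f : ℤ[X]} (hf : f ≠ 0) {a b : ℝ} (hab : a < b) :
    ∃ ρ ∈ Set.Ioo a b, ∀ z : ℂ, ‖z‖ = ρ → aeval z f ≠ 0 := by
  classical
  obtain ⟨ρ, hρ, hρS⟩ :=
    (Set.Ioo_infinite hab).exists_notMem_finset ((f.aroots ℂ).map (‖·‖)).toFinset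
  refine ⟨ρ, hρ, fun z hz h0 => hρS ?_⟩
  rw [Multiset.mem_toFinset]
  exact Multiset.mem_map.2 ⟨z, mem_aroots.2 ⟨hf, h0⟩, hz⟩

lemma exists_pos_le_norm_on_sphere {g : ℂ → ℂ} (hg : Continuous g) {ρ : ℝ} (hρ : 0 ≤ ρ)
    (h : ∀ z : ℂ, ‖z‖ = ρ → g z ≠ 0) : ∃ L > 0, ∀ z : ℂ, ‖z‖ = ρ → L ≤ ‖g z‖ := by
  obtain ⟨z₀, hz₀, hmin⟩ := (isCompact_sphere (0 : ℂ) ρ).exists_isMinOn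
    (NormedSpace.sphere_nonempty.2 hρ) hg.norm.continuousOn
  exact ⟨‖g z₀‖, norm_pos_iff.2 (h z₀ (mem_sphere_zero_iff_norm.1 hz₀)),
    fun z hz => hmin (mem_sphere_zero_iff_norm.2 hz)⟩

lemma exists_lt_one_sub_pow_mul {ρ x : ℝ} (h : ρ < x) (k : ℕ) :
    ∃ η, 0 < η ∧ η ≤ 1 / 2 ∧ ρ < (1 - η) ^ k * x := by
  have hlim : Tendsto (fun η : ℝ => (1 - η) ^ k * x) (𝓝 0) (𝓝 x) := by
    have hcont : Continuous fun η : ℝ => (1 - η) ^ k * x := by fun_prop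
    simpa using hcont.tendsto 0
  obtain ⟨η, hηx, hη⟩ := (((hlim.eventually (lt_mem_nhds h)).filter_mono nhdsWithin_le_nhds).and
    (Ioo_mem_nhdsGT (by norm_num : (0 : ℝ) < 1 / 2))).exists
  exact ⟨η, hη.1, hη.2.le, hηx⟩

lemma eventually_two_mul_four_pow_le {ρ c η : ℝ} (hρ : 1 < ρ) (hηc : 0 < η * c) (k : ℕ) :
    ∀ᶠ M in atTop, 2 * 4 ^ k ≤ η * c * ((1 - ρ⁻¹) / 2) ^ k * ρ ^ M := by
  have hq : 0 < (1 - ρ⁻¹) / 2 := by have := inv_lt_one_of_one_lt₀ hρ; linarith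
  exact ((tendsto_pow_atTop_atTop_of_one_lt hρ).const_mul_atTop
    (by positivity : 0 < η * c * ((1 - ρ⁻¹) / 2) ^ k)).eventually_ge_atTop _

section Rpoly

variable (m : ℕ → ℕ)

lemma Rpoly_succ {j : ℕ} (hj : 1 ≤ j) :
    Rpoly m (j + 1) = X ^ m (j + 1) * (X - 1) * Rpoly m j
      + (-1 : ℤ[X]) ^ (j + 1) * (2 * X) * (Rpoly m j).reverse := by
  obtain ⟨i, rfl⟩ := Nat.exists_eq_add_of_le' hj
  rfl

lemma Rpoly_congr {m' : ℕ → ℕ} {j : ℕ} (h : ∀ t, 1 ≤ t → t ≤ j → m' t = m t) :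
    Rpoly m' j = Rpoly m j := by
  induction j with
  | zero => rfl
  | succ j ih =>
    rcases Nat.eq_zero_or_pos j with rfl | hj
    · simp only [Rpoly, h 1 le_rfl le_rfl]
    · rw [Rpoly_succ m' hj, Rpoly_succ m hj, ih fun t ht ht' => h t ht (by omega),
        h (j + 1) (by omega) le_rfl]

lemma l1Norm_Rpoly_le (j : ℕ) : l1Norm (Rpoly m j) ≤ 4 ^ j := by
  have hA (a : ℕ) : l1Norm (X ^ a * (X - 1) : ℤ[X]) ≤ 2 := by
    refine (l1Norm_mul_le _ _).trans ?_
    rw [l1Norm_X_pow, one_mul, sub_eq_add_neg, ← pow_one X, ← C_1, ← C_neg]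
    refine (l1Norm_add_le _ _).trans ?_
    rw [l1Norm_X_pow, l1Norm_C, norm_neg, norm_one]; norm_num
  have hB (n : ℕ) : l1Norm ((-1 : ℤ[X]) ^ n * (2 * X)) ≤ 2 := by
    rw [← C_1, ← C_neg, ← C_pow, ← C_ofNat, ← mul_assoc, ← C_mul, ← pow_one X,
      C_mul_X_pow_eq_monomial, l1Norm_monomial, norm_mul, norm_pow, norm_neg, norm_one, one_pow,
      one_mul, Int.norm_eq_abs]
    norm_num
  induction j with
  | zero => rw [Rpoly, ← C_1, l1Norm_C, norm_one, pow_zero]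
  | succ j ih =>
    rcases Nat.eq_zero_or_pos j with rfl | hj
    · have h2X := hB 1
      rw [pow_one, neg_one_mul] at h2X
      rw [Rpoly, sub_eq_add_neg, zero_add, pow_one]
      linarith [l1Norm_add_le (X ^ (m 1 + 1) * (X - 1) : ℤ[X]) (-(2 * X)), hA (m 1 + 1)]
    · have h1 := (l1Norm_mul_le (X ^ m (j + 1) * (X - 1)) (Rpoly m j)).trans
        (mul_le_mul_of_nonneg_right (hA _) (l1Norm_nonneg _))
      have h2 := (l1Norm_mul_le ((-1 : ℤ[X]) ^ (j + 1) * (2 * X)) (Rpoly m j).reverse).trans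
        (mul_le_mul_of_nonneg_right (hB _) (l1Norm_nonneg _))
      rw [l1Norm_reverse] at h2
      rw [Rpoly_succ m hj, pow_succ (4 : ℝ)]
      linarith [l1Norm_add_le (X ^ m (j + 1) * (X - 1) * Rpoly m j)
        ((-1 : ℤ[X]) ^ (j + 1) * (2 * X) * (Rpoly m j).reverse)]

lemma monic_Rpoly_succ {j : ℕ} (hj : 1 ≤ j) (hR : (Rpoly m j).Monic) (hm : 1 ≤ m (j + 1)) :
    (Rpoly m (j + 1)).Monic ∧
      (Rpoly m (j + 1)).natDegree = (Rpoly m j).natDegree + (m (j + 1) + 1) := by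
  obtain ⟨hXm, hXd⟩ := monic_X_pow_mul_X_sub_one (R := ℤ) (m (j + 1))
  have hA : (X ^ m (j + 1) * (X - 1) * Rpoly m j).Monic := hXm.mul hR
  have hdA : (X ^ m (j + 1) * (X - 1) * Rpoly m j).natDegree
      = (Rpoly m j).natDegree + (m (j + 1) + 1) := by
    rw [hXm.natDegree_mul hR, hXd, add_comm]
  have hdE : ((-1 : ℤ[X]) ^ (j + 1) * (2 * X) * (Rpoly m j).reverse).natDegree
      ≤ 1 + (Rpoly m j).natDegree :=
    natDegree_mul_le.trans (add_le_add (by compute_degree) (Rpoly m j).reverse_natDegree_le)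
  rw [Rpoly_succ m hj, ← hdA]
  exact hA.add_of_natDegree_lt (by omega)

lemma monic_Rpoly {j : ℕ} (hm : ∀ t, 1 ≤ t → t ≤ j → 1 ≤ m t) : (Rpoly m j).Monic := by
  induction j with
  | zero => exact monic_one
  | succ j ih =>
    rcases Nat.eq_zero_or_pos j with rfl | hj
    · obtain ⟨hA, hdA⟩ := monic_X_pow_mul_X_sub_one (R := ℤ) (m 1 + 1)
      rw [Rpoly, sub_eq_add_neg]
      exact (hA.add_of_natDegree_lt (by rw [hdA]; compute_degree!)).1
    · exact (monic_Rpoly_succ m hj (ih fun t ht ht' => hm t ht (by omega))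
        (hm _ (by omega) le_rfl)).1

lemma natDegree_Rpoly {p j : ℕ} (hp : 1 ≤ p) (hpj : p ≤ j) (hm : ∀ t, 1 ≤ t → t ≤ j → 1 ≤ m t) :
    (Rpoly m j).natDegree = (Rpoly m p).natDegree + ∑ t ∈ Finset.Ioc p j, (m t + 1) := by
  induction j, hpj using Nat.le_induction with
  | base => simp
  | succ j hpj ih =>
    have hm' : ∀ t, 1 ≤ t → t ≤ j → 1 ≤ m t := fun t ht ht' => hm t ht (by omega)
    rw [(monic_Rpoly_succ m (by omega) (monic_Rpoly m hm') (hm _ (by omega) le_rfl)).2, ih hm',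
      Finset.sum_Ioc_succ_top hpj, add_assoc]

lemma coeff_Rpoly {j : ℕ} (hj : 1 ≤ j) (hm : ∀ t, 1 ≤ t → t ≤ j → 1 ≤ m t) :
    (Rpoly m j).coeff 0 = 0 ∧ (Rpoly m j).coeff 1 = (-1) ^ j * 2 := by
  induction j, hj using Nat.le_induction with
  | base =>
    have h1 : 1 ≤ m 1 := hm 1 le_rfl le_rfl
    simp only [Rpoly, coeff_sub, coeff_X_pow_mul', mul_comm (2 : ℤ[X]), coeff_mul_ofNat]
    constructor
    · simp
    · rw [if_neg (by omega)]; simp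
  | succ j hj ih =>
    obtain ⟨ih0, -⟩ := ih fun t ht ht' => hm t ht (by omega)
    have hR := monic_Rpoly m (j := j) fun t ht ht' => hm t ht (by omega)
    have ha : 1 ≤ m (j + 1) := hm _ (by omega) le_rfl
    have hE : (-1 : ℤ[X]) ^ (j + 1) * (2 * X) * (Rpoly m j).reverse
        = C ((-1) ^ (j + 1) * 2) * (X * (Rpoly m j).reverse) := by
      simp only [map_mul, map_pow, map_neg, map_one, map_ofNat]
      ring
    rw [Rpoly_succ m hj, hE, mul_assoc, coeff_add, coeff_add, coeff_X_pow_mul', coeff_X_pow_mul',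
      coeff_C_mul, coeff_C_mul, coeff_X_mul_zero, coeff_X_mul, coeff_zero_reverse, hR.leadingCoeff]
    refine ⟨by simp [show ¬ m (j + 1) ≤ 0 by omega], ?_⟩
    split_ifs with h
    · rw [show 1 - m (j + 1) = 0 by omega, mul_coeff_zero, ih0]; ring
    · ring

lemma monic_Ppoly {k : ℕ} (hm : ∀ t, 1 ≤ t → t ≤ k + 1 → 1 ≤ m t) :
    (Ppoly m k).Monic ∧ (Ppoly m k).natDegree = m (k + 1) + (Rpoly m k).natDegree := by
  have hR := monic_Rpoly m (j := k) fun t ht ht' => hm t ht (by omega)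
  have hdA : (X ^ m (k + 1) * Rpoly m k).natDegree = m (k + 1) + (Rpoly m k).natDegree := by
    rw [(monic_X_pow _).natDegree_mul hR, natDegree_X_pow]
  have hdE : ((-1 : ℤ[X]) ^ (k + 1) * (Rpoly m k).reverse).natDegree ≤ (Rpoly m k).natDegree :=
    natDegree_mul_le.trans (by
      have := (Rpoly m k).reverse_natDegree_le
      have : ((-1 : ℤ[X]) ^ (k + 1)).natDegree = 0 := by compute_degree!
      omega)
  rw [Ppoly, ← hdA]
  have ha := hm (k + 1) (by omega) le_rfl
  exact ((monic_X_pow _).mul hR).add_of_natDegree_lt (by omega)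

lemma one_lt_maxRootAbs_Rpoly {j : ℕ} (hj : 1 ≤ j)
    (hm : ∀ t, 1 ≤ t → t ≤ j → 1 ≤ m t) : 1 < maxRootAbs (Rpoly m j) := by
  have hR := monic_Rpoly m hm
  obtain ⟨h0, h1⟩ := coeff_Rpoly m hj hm
  set F := (Rpoly m j).map (algebraMap ℤ ℂ)
  set g := F.divX
  have hFg : F = X * g := by
    conv_lhs => rw [← X_mul_divX_add F]
    rw [coeff_map, h0, map_zero, C_0, add_zero]
  have hg : g.Monic := monic_X.of_mul_monic_left (hFg ▸ hR.map _)
  have hg0 : ‖g.coeff 0‖ = 2 := by simp [g, F, coeff_divX, h1]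
  -- the roots of `g` multiply to `± g(0) = ± 2`, so they cannot all lie in the unit disc
  have hprod : 1 ^ g.natDegree < (g.roots.map fun α => max 1 ‖α‖).prod := by
    have := norm_coeff_le_choose_mul_mahlerMeasure 0 g
    rw [Nat.choose_zero_right, Nat.cast_one, one_mul, hg0,
      mahlerMeasure_eq_leadingCoeff_mul_prod_roots, hg.leadingCoeff, norm_one, one_mul] at this
    linarith [one_pow (M := ℝ) g.natDegree]
  obtain ⟨β, hβ, hβ1⟩ := exists_mem_roots_lt_norm hprod
  have hroot : aeval β (Rpoly m j) = 0 := by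
    rw [← eval_map_algebraMap]
    change eval β F = 0
    rw [hFg, eval_mul, ((mem_roots hg.ne_zero).1 hβ).eq_zero, mul_zero]
  exact hβ1.trans_le (norm_le_maxRootAbs hR.ne_zero hroot)

end Rpoly

lemma one_le_of_agree_of_le {m m' : ℕ → ℕ} {p n M : ℕ} (hm : ∀ t, 1 ≤ t → t ≤ p → 1 ≤ m t)
    (hM : 1 ≤ M) (hagree : ∀ t, 1 ≤ t → t ≤ p → m' t = m t) (hbig : ∀ t, p < t → t ≤ n → M ≤ m' t)
    (t : ℕ) (ht : 1 ≤ t) (htn : t ≤ n) : 1 ≤ m' t := by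
  rcases le_or_gt t p with htp | htp
  · rw [hagree t ht htp]; exact hm t ht htp
  · exact hM.trans (hbig t htp htn)

/-- `R_j` with the reciprocal terms of the recursion after `R_p` dropped. -/
noncomputable def RpolyMain (m : ℕ → ℕ) (p j : ℕ) : ℤ[X] :=
  (∏ t ∈ Finset.Ioc p j, X ^ m t * (X - 1)) * Rpoly m p

section RpolyMain

variable (m : ℕ → ℕ) {p j : ℕ}

@[simp] lemma RpolyMain_self : RpolyMain m p p = Rpoly m p := by
  simp [RpolyMain]

lemma RpolyMain_succ (hpj : p ≤ j) :
    RpolyMain m p (j + 1) = X ^ m (j + 1) * (X - 1) * RpolyMain m p j := by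
  rw [RpolyMain, RpolyMain, Finset.prod_Ioc_succ_top hpj]
  ring

lemma monic_RpolyMain (hR : (Rpoly m p).Monic) :
    (RpolyMain m p j).Monic ∧
      (RpolyMain m p j).natDegree = (Rpoly m p).natDegree + ∑ t ∈ Finset.Ioc p j, (m t + 1) := by
  have hprod : ∀ t ∈ Finset.Ioc p j, (X ^ m t * (X - 1) : ℤ[X]).Monic :=
    fun t _ => (monic_X_pow_mul_X_sub_one (m t)).1
  refine ⟨(monic_prod_of_monic _ _ hprod).mul hR, ?_⟩
  rw [RpolyMain, (monic_prod_of_monic _ _ hprod).natDegree_mul hR,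
    natDegree_prod_of_monic _ _ hprod, add_comm]
  simp only [(monic_X_pow_mul_X_sub_one _).2]

lemma le_norm_aeval_RpolyMain {ρ c : ℝ} (hρ : 1 < ρ) (hc : 0 ≤ c) {z : ℂ} (hz : ρ ≤ ‖z‖)
    (hR : c * ‖z‖ ^ (Rpoly m p).natDegree ≤ ‖aeval z (Rpoly m p)‖) (hpj : p ≤ j) :
    c * (1 - ρ⁻¹) ^ (j - p) * ‖z‖ ^ ((Rpoly m p).natDegree + ∑ t ∈ Finset.Ioc p j, (m t + 1))
      ≤ ‖aeval z (RpolyMain m p j)‖ := by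
  induction j, hpj using Nat.le_induction with
  | base => simpa using hR
  | succ j hpj ih =>
    have hρ' : 0 ≤ 1 - ρ⁻¹ := sub_nonneg.2 (inv_le_one_of_one_le₀ hρ.le)
    have hz1 := sub_inv_mul_norm_le_norm_sub_one (by linarith) hz
    rw [RpolyMain_succ m hpj, map_mul, map_mul, map_pow, aeval_X, map_sub, aeval_X, map_one,
      norm_mul, norm_mul, norm_pow, Finset.sum_Ioc_succ_top hpj,
      show j + 1 - p = j - p + 1 by omega]
    calc c * (1 - ρ⁻¹) ^ (j - p + 1)
          * ‖z‖ ^ ((Rpoly m p).natDegree + (∑ t ∈ Finset.Ioc p j, (m t + 1) + (m (j + 1) + 1)))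
        = ‖z‖ ^ m (j + 1) * ((1 - ρ⁻¹) * ‖z‖) * (c * (1 - ρ⁻¹) ^ (j - p)
          * ‖z‖ ^ ((Rpoly m p).natDegree + ∑ t ∈ Finset.Ioc p j, (m t + 1))) := by ring
      _ ≤ ‖z‖ ^ m (j + 1) * ‖z - 1‖ * ‖aeval z (RpolyMain m p j)‖ := by gcongr

end RpolyMain

section dominance

variable {m : ℕ → ℕ} {p k M : ℕ} {ρ c η : ℝ} {z : ℂ}
  (hp : 1 ≤ p) (hm : ∀ t, 1 ≤ t → t ≤ k → 1 ≤ m t) (hρ : 1 < ρ) (hz : ρ ≤ ‖z‖) (hc : 0 ≤ c)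
  (hR : c * ‖z‖ ^ (Rpoly m p).natDegree ≤ ‖aeval z (Rpoly m p)‖) (hη' : η ≤ 1 / 2)
include hp hm hρ hz hc hR hη'

lemma mul_pow_le_norm_aeval_Rpoly {j : ℕ} (hpj : p ≤ j) (hjk : j ≤ k)
    (ih : (1 - η) ^ (j - p) * ‖aeval z (RpolyMain m p j)‖ ≤ ‖aeval z (Rpoly m j)‖) :
    c * ((1 - ρ⁻¹) / 2) ^ (j - p) * ‖z‖ ^ (Rpoly m j).natDegree ≤ ‖aeval z (Rpoly m j)‖ := by
  have hρ' : 0 ≤ 1 - ρ⁻¹ := sub_nonneg.2 (inv_le_one_of_one_le₀ hρ.le)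
  have h2 : (2⁻¹ : ℝ) ^ (j - p) ≤ (1 - η) ^ (j - p) :=
    pow_le_pow_left₀ (by norm_num) (by linarith) _
  rw [natDegree_Rpoly m hp hpj fun t ht ht' => hm t ht (by omega)]
  calc c * ((1 - ρ⁻¹) / 2) ^ (j - p) * ‖z‖ ^ _
      = 2⁻¹ ^ (j - p) * (c * (1 - ρ⁻¹) ^ (j - p)
          * ‖z‖ ^ ((Rpoly m p).natDegree + ∑ t ∈ Finset.Ioc p j, (m t + 1))) := by
        rw [div_pow, inv_pow]; ring
    _ ≤ (1 - η) ^ (j - p) * ‖aeval z (RpolyMain m p j)‖ :=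
        mul_le_mul h2 (le_norm_aeval_RpolyMain m hρ hc hz hR hpj) (by positivity)
          (pow_nonneg (by linarith) _)
    _ ≤ _ := ih

-- `hM` makes `ρ ^ M` absorb the bound `4 ^ k` on the `ℓ¹` norms of the reciprocal terms.
variable (hη : 0 ≤ η) (hM : 2 * 4 ^ k ≤ η * c * ((1 - ρ⁻¹) / 2) ^ k * ρ ^ M)
include hη hM

lemma norm_aeval_reverse_Rpoly_le {j a : ℕ} (hpj : p ≤ j) (hjk : j ≤ k) (ha : M ≤ a)
    (ih : (1 - η) ^ (j - p) * ‖aeval z (RpolyMain m p j)‖ ≤ ‖aeval z (Rpoly m j)‖) :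
    ‖aeval z (Rpoly m j).reverse‖ ≤ η * ((1 - ρ⁻¹) / 2) * ‖z‖ ^ a * ‖aeval z (Rpoly m j)‖ := by
  set q := (1 - ρ⁻¹) / 2
  have hq0 : 0 < q := by have := inv_lt_one_of_one_lt₀ hρ; simp only [q]; linarith
  have hq1 : q ≤ 1 := by have := inv_pos.2 (zero_lt_one.trans hρ); simp only [q]; linarith
  have hz1 : 1 ≤ ‖z‖ := hρ.le.trans hz
  have hbig : 4 ^ j ≤ η * q ^ (j - p + 1) * c * ‖z‖ ^ a := by
    have hq : q ^ k ≤ q ^ (j - p + 1) := pow_le_pow_of_le_one hq0.le hq1 (by omega)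
    have hzM : ρ ^ M ≤ ‖z‖ ^ a :=
      (pow_le_pow_left₀ (by linarith) hz M).trans (pow_le_pow_right₀ hz1 ha)
    calc (4 : ℝ) ^ j ≤ 2 * 4 ^ k := by
          have := pow_le_pow_right₀ (by norm_num : (1 : ℝ) ≤ 4) hjk
          linarith [pow_pos (by norm_num : (0 : ℝ) < 4) k]
      _ ≤ (η * c) * (q ^ k * ρ ^ M) := by rw [← mul_assoc]; exact hM
      _ ≤ (η * c) * (q ^ (j - p + 1) * ‖z‖ ^ a) := by gcongr
      _ = _ := by ring
  calc ‖aeval z (Rpoly m j).reverse‖ ≤ l1Norm (Rpoly m j) * ‖z‖ ^ (Rpoly m j).natDegree :=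
        norm_aeval_reverse_le _ hz1
    _ ≤ η * q ^ (j - p + 1) * c * ‖z‖ ^ a * ‖z‖ ^ (Rpoly m j).natDegree := by
        gcongr; exact (l1Norm_Rpoly_le m j).trans hbig
    _ = η * q * ‖z‖ ^ a * (c * q ^ (j - p) * ‖z‖ ^ (Rpoly m j).natDegree) := by ring
    _ ≤ η * q * ‖z‖ ^ a * ‖aeval z (Rpoly m j)‖ := by
        gcongr; exact mul_pow_le_norm_aeval_Rpoly hp hm hρ hz hc hR hη' hpj hjk ih

lemma le_norm_aeval_Rpoly (hmM : ∀ t, p < t → t ≤ k → M ≤ m t) {j : ℕ} (hpj : p ≤ j)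
    (hjk : j ≤ k) : (1 - η) ^ (j - p) * ‖aeval z (RpolyMain m p j)‖ ≤ ‖aeval z (Rpoly m j)‖ := by
  induction j, hpj using Nat.le_induction with
  | base => simp
  | succ j hpj ih =>
    have ih := ih (by omega)
    have hrev := norm_aeval_reverse_Rpoly_le hp hm hρ hz hc hR hη' hη hM hpj (by omega)
      (hmM (j + 1) (by omega) hjk) ih
    have hz1 := sub_inv_mul_norm_le_norm_sub_one (by linarith) hz
    rw [Rpoly_succ m (by omega), RpolyMain_succ m hpj]
    simp only [map_add, map_mul, map_pow, map_neg, map_one, map_sub, aeval_X, map_ofNat]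
    set A := z ^ m (j + 1) * (z - 1) * aeval z (Rpoly m j)
    have hA : ‖A‖ = ‖z‖ ^ m (j + 1) * ‖z - 1‖ * ‖aeval z (Rpoly m j)‖ := by
      simp only [A, norm_mul, norm_pow]
    have hE : ‖(-1) ^ (j + 1) * (2 * z) * aeval z (Rpoly m j).reverse‖ ≤ η * ‖A‖ := by
      rw [hA, norm_mul, norm_mul, norm_pow, norm_neg, norm_one, one_pow, one_mul, norm_mul,
        Complex.norm_two]
      calc 2 * ‖z‖ * ‖aeval z (Rpoly m j).reverse‖
          ≤ 2 * ‖z‖ * (η * ((1 - ρ⁻¹) / 2) * ‖z‖ ^ m (j + 1) * ‖aeval z (Rpoly m j)‖) := by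
            gcongr
        _ = η * ‖z‖ ^ m (j + 1) * ((1 - ρ⁻¹) * ‖z‖) * ‖aeval z (Rpoly m j)‖ := by ring
        _ ≤ η * ‖z‖ ^ m (j + 1) * ‖z - 1‖ * ‖aeval z (Rpoly m j)‖ := by gcongr
        _ = _ := by ring
    calc (1 - η) ^ (j + 1 - p) * ‖z ^ m (j + 1) * (z - 1) * aeval z (RpolyMain m p j)‖
        = (1 - η) * (‖z‖ ^ m (j + 1) * ‖z - 1‖ * ((1 - η) ^ (j - p)
            * ‖aeval z (RpolyMain m p j)‖)) := by
          rw [show j + 1 - p = j - p + 1 by omega, pow_succ, norm_mul, norm_mul, norm_pow]; ring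
      _ ≤ (1 - η) * ‖A‖ := by rw [hA]; gcongr; linarith
      _ ≤ _ := one_sub_mul_norm_le_norm_add hE

lemma le_norm_aeval_Ppoly (hmM : ∀ t, p < t → t ≤ k + 1 → M ≤ m t) (hpk : p ≤ k) :
    (1 - η) ^ (k + 1 - p) * ‖aeval z (X ^ m (k + 1) * RpolyMain m p k)‖
      ≤ ‖aeval z (Ppoly m k)‖ := by
  have hRk := le_norm_aeval_Rpoly hp hm hρ hz hc hR hη' hη hM
    (fun t ht ht' => hmM t ht (by omega)) hpk le_rfl
  have hrev := norm_aeval_reverse_Rpoly_le hp hm hρ hz hc hR hη' hη hM hpk le_rfl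
    (hmM (k + 1) (by omega) le_rfl) hRk
  rw [Ppoly]
  simp only [map_add, map_mul, map_pow, map_neg, map_one, aeval_X]
  set A := z ^ m (k + 1) * aeval z (Rpoly m k)
  have hA : ‖A‖ = ‖z‖ ^ m (k + 1) * ‖aeval z (Rpoly m k)‖ := by simp only [A, norm_mul, norm_pow]
  have hE : ‖(-1) ^ (k + 1) * aeval z (Rpoly m k).reverse‖ ≤ η * ‖A‖ := by
    have hq : (1 - ρ⁻¹) / 2 ≤ 1 := by have := inv_pos.2 (zero_lt_one.trans hρ); linarith
    rw [hA, norm_mul, norm_pow, norm_neg, norm_one, one_pow, one_mul]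
    calc _ ≤ η * ((1 - ρ⁻¹) / 2) * ‖z‖ ^ m (k + 1) * ‖aeval z (Rpoly m k)‖ := hrev
      _ ≤ η * 1 * ‖z‖ ^ m (k + 1) * ‖aeval z (Rpoly m k)‖ := by gcongr
      _ = _ := by ring
  calc (1 - η) ^ (k + 1 - p) * ‖z ^ m (k + 1) * aeval z (RpolyMain m p k)‖
      = (1 - η) * (‖z‖ ^ m (k + 1) * ((1 - η) ^ (k - p) * ‖aeval z (RpolyMain m p k)‖)) := by
        rw [show k + 1 - p = k - p + 1 by omega, pow_succ, norm_mul, norm_pow]; ring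
    _ ≤ (1 - η) * ‖A‖ := by rw [hA]; gcongr; linarith
    _ ≤ _ := one_sub_mul_norm_le_norm_add hE

end dominance

lemma aeval_X_pow_mul_RpolyMain_ne_zero (m : ℕ → ℕ) {p j : ℕ} {ρ c : ℝ} (hρ : 1 < ρ) (hc : 0 < c)
    {z : ℂ} (hz : ρ ≤ ‖z‖) (hR : c * ‖z‖ ^ (Rpoly m p).natDegree ≤ ‖aeval z (Rpoly m p)‖)
    (hpj : p ≤ j) : aeval z (X ^ m (j + 1) * RpolyMain m p j) ≠ 0 := by
  have hmain := le_norm_aeval_RpolyMain m hρ hc.le hz hR hpj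
  have hρ' : 0 < 1 - ρ⁻¹ := sub_pos.2 (inv_lt_one_of_one_lt₀ hρ)
  have hz0 : z ≠ 0 := norm_pos_iff.1 (by linarith)
  rw [map_mul, map_pow, aeval_X]
  exact mul_ne_zero (pow_ne_zero _ hz0) (norm_pos_iff.1 (lt_of_lt_of_le (by positivity) hmain))

lemma monic_X_pow_mul_RpolyMain {m : ℕ → ℕ} {p k : ℕ} (hp : 1 ≤ p) (hpk : p ≤ k)
    (hm : ∀ t, 1 ≤ t → t ≤ k + 1 → 1 ≤ m t) :
    (X ^ m (k + 1) * RpolyMain m p k).Monic ∧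
      (X ^ m (k + 1) * RpolyMain m p k).natDegree = (Ppoly m k).natDegree := by
  obtain ⟨hMmon, hMdeg⟩ := monic_RpolyMain m (j := k) (monic_Rpoly m (j := p) fun t ht ht' =>
    hm t ht (by omega))
  refine ⟨(monic_X_pow _).mul hMmon, ?_⟩
  rw [(monic_Ppoly m hm).2, (monic_X_pow _).natDegree_mul hMmon, natDegree_X_pow, hMdeg,
    natDegree_Rpoly m hp hpk fun t ht ht' => hm t ht (by omega)]

lemma maxRootAbs_Ppoly_le {m : ℕ → ℕ} {p k M : ℕ} {r c : ℝ} (hp : 1 ≤ p) (hpk : p ≤ k)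
    (hm : ∀ t, 1 ≤ t → t ≤ k → 1 ≤ m t) (hr : 1 < r) (hc : 0 < c)
    (hR : ∀ z : ℂ, r ≤ ‖z‖ → c * ‖z‖ ^ (Rpoly m p).natDegree ≤ ‖aeval z (Rpoly m p)‖)
    (hM : 2 * 4 ^ k ≤ 1 / 2 * c * ((1 - r⁻¹) / 2) ^ k * r ^ M)
    (hmM : ∀ t, p < t → t ≤ k + 1 → M ≤ m t) : maxRootAbs (Ppoly m k) ≤ r := by
  refine maxRootAbs_le (by linarith) fun z hz => ?_
  by_contra! hzr
  have hP := le_norm_aeval_Ppoly hp hm hr hzr.le hc.le (hR z hzr.le) (by norm_num) (by norm_num)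
    hM hmM hpk
  have hQ := norm_pos_iff.2 (aeval_X_pow_mul_RpolyMain_ne_zero m hr hc hzr.le (hR z hzr.le) hpk)
  rw [hz, norm_zero] at hP
  have : 0 < (1 - 1 / 2 : ℝ) ^ (k + 1 - p) * ‖aeval z (X ^ m (k + 1) * RpolyMain m p k)‖ := by
    positivity
  linarith

lemma lt_maxRootAbs_Ppoly {m : ℕ → ℕ} {p k M : ℕ} {ρ c η : ℝ} {β : ℂ} (hp : 1 ≤ p) (hpk : p ≤ k)
    (hm : ∀ t, 1 ≤ t → t ≤ k + 1 → 1 ≤ m t) (hρ : 1 < ρ) (hc : 0 < c)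
    (hR : ∀ z : ℂ, ‖z‖ = ρ → c * ‖z‖ ^ (Rpoly m p).natDegree ≤ ‖aeval z (Rpoly m p)‖)
    (hη : 0 ≤ η) (hη' : η ≤ 1 / 2) (hM : 2 * 4 ^ k ≤ η * c * ((1 - ρ⁻¹) / 2) ^ k * ρ ^ M)
    (hmM : ∀ t, p < t → t ≤ k + 1 → M ≤ m t) (hβ : aeval β (Rpoly m p) = 0)
    (hρβ : ρ < (1 - η) ^ k * ‖β‖) : ρ < maxRootAbs (Ppoly m k) := by
  have hm' : ∀ t, 1 ≤ t → t ≤ k → 1 ≤ m t := fun t ht ht' => hm t ht (by omega)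
  obtain ⟨hQmon, hQdeg⟩ := monic_X_pow_mul_RpolyMain hp hpk hm
  have hPmon := (monic_Ppoly m hm).1
  have hβQ : β ∈ ((X ^ m (k + 1) * RpolyMain m p k).map (algebraMap ℤ ℂ)).roots := by
    rw [mem_roots (hQmon.map _).ne_zero, IsRoot, eval_map_algebraMap]
    simp only [RpolyMain, map_mul, hβ, mul_zero]
  obtain ⟨α, hα, hρα⟩ := exists_mem_roots_lt_norm_of_norm_eval_le (hPmon.map (algebraMap ℤ ℂ))
    (hQmon.map _) (by rw [hPmon.natDegree_map, hQmon.natDegree_map, hQdeg]) (by linarith) hβQ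
    (κ := (1 - η) ^ (k + 1 - p)) (hρβ.trans_le (mul_le_mul_of_nonneg_right
      (pow_le_pow_of_le_one (by linarith) (by linarith) (by omega)) (norm_nonneg β)))
    fun z hz => by
      rw [eval_map_algebraMap, eval_map_algebraMap]
      exact ⟨aeval_X_pow_mul_RpolyMain_ne_zero m hρ hc hz.ge (hR z hz) hpk,
        le_norm_aeval_Ppoly hp hm' hρ hz.ge hc.le (hR z hz) hη' hη hM hmM hpk⟩
  have hαP : aeval α (Ppoly m k) = 0 := by
    rw [← eval_map_algebraMap]; exact (mem_roots (hPmon.map _).ne_zero).1 hα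
  exact hρα.trans_le (norm_le_maxRootAbs hPmon.ne_zero hαP)

lemma eventually_maxRootAbs_Ppoly_le {m : ℕ → ℕ} {p k : ℕ} (hp : 1 ≤ p) (hpk : p ≤ k)
    (hm : ∀ t, 1 ≤ t → t ≤ p → 1 ≤ m t) {r : ℝ} (hr : maxRootAbs (Rpoly m p) < r) :
    ∀ᶠ M in atTop, ∀ m' : ℕ → ℕ, (∀ t, 1 ≤ t → t ≤ p → m' t = m t) →
      (∀ t, p < t → t ≤ k + 1 → M ≤ m' t) → maxRootAbs (Ppoly m' k) ≤ r := by
  set ℓ := maxRootAbs (Rpoly m p)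
  have hℓ : 1 < ℓ := one_lt_maxRootAbs_Rpoly m hp hm
  have hc : 0 < 1 - ℓ / r := by rw [sub_pos, div_lt_one (by linarith)]; exact hr
  filter_upwards [eventually_two_mul_four_pow_le (hℓ.trans hr)
    (by positivity : (0 : ℝ) < 1 / 2 * (1 - ℓ / r) ^ (Rpoly m p).natDegree) k,
    eventually_ge_atTop 1] with M hM hM1 m' hagree hbig
  rw [← Rpoly_congr m hagree] at hM
  refine maxRootAbs_Ppoly_le hp hpk (fun t ht ht' => one_le_of_agree_of_le hm hM1 hagree hbig t ht
    (by omega)) (hℓ.trans hr) (by positivity) (fun z hz => ?_) hM hbig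
  have hℓz : ℓ ≤ ℓ / r * ‖z‖ := by
    rw [div_mul_eq_mul_div, le_div_iff₀ (by linarith)]
    exact mul_le_mul_of_nonneg_left hz (by linarith)
  rw [Rpoly_congr m hagree, ← mul_pow]
  exact (pow_le_pow_left₀ (by positivity) (by linarith) _).trans
    (pow_le_norm_aeval_of_maxRootAbs_le (monic_Rpoly m hm) (by linarith))

lemma eventually_lt_maxRootAbs_Ppoly {m : ℕ → ℕ} {p k : ℕ} (hp : 1 ≤ p) (hpk : p ≤ k)
    (hm : ∀ t, 1 ≤ t → t ≤ p → 1 ≤ m t) {r : ℝ} (hr : r < maxRootAbs (Rpoly m p)) :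
    ∀ᶠ M in atTop, ∀ m' : ℕ → ℕ, (∀ t, 1 ≤ t → t ≤ p → m' t = m t) →
      (∀ t, p < t → t ≤ k + 1 → M ≤ m' t) → r < maxRootAbs (Ppoly m' k) := by
  obtain ⟨β, hβ, hβr⟩ := exists_root_of_lt_maxRootAbs (zero_le_one.trans (le_max_left 1 r))
    (max_lt (one_lt_maxRootAbs_Rpoly m hp hm) hr)
  obtain ⟨ρ, ⟨hρr, hρβ⟩, hcircle⟩ :=
    exists_mem_Ioo_forall_norm_eq_aeval_ne_zero (monic_Rpoly m hm).ne_zero hβr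
  have hρ : 1 < ρ := (le_max_left 1 r).trans_lt hρr
  obtain ⟨η, hη0, hη, hρη⟩ := exists_lt_one_sub_pow_mul hρβ k
  obtain ⟨L, hL, hLR⟩ :=
    exists_pos_le_norm_on_sphere (Rpoly m p).continuous_aeval (by linarith) hcircle
  have hc : 0 < L / ρ ^ (Rpoly m p).natDegree := by positivity
  filter_upwards [eventually_two_mul_four_pow_le hρ (mul_pos hη0 hc) k, eventually_ge_atTop 1]
    with M hM hM1 m' hagree hbig
  have hRm : Rpoly m' p = Rpoly m p := Rpoly_congr m hagree
  refine (le_max_right 1 r).trans_lt (hρr.trans (lt_maxRootAbs_Ppoly hp hpk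
    (one_le_of_agree_of_le hm hM1 hagree hbig) hρ hc (fun z hz => ?_) hη0.le hη hM hbig
    (by rwa [hRm]) hρη))
  rw [hRm, hz, div_mul_cancel₀ _ (by positivity)]
  exact hLR z hz

theorem Ppoly_maxRootAbs_tendsto_Rpoly_general (k i : ℕ)
    (hi₁ : 2 ≤ i) (hi₂ : i ≤ k + 1) (m : ℕ → ℕ)
    (hm : ∀ j, 1 ≤ j → j ≤ i - 1 → 1 ≤ m j) :
    1 < maxRootAbs (Rpoly m (i - 1)) ∧
    ∀ ε : ℝ, 0 < ε → ∃ M : ℕ, 1 ≤ M ∧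
      ∀ m' : ℕ → ℕ, (∀ j, 1 ≤ j → j ≤ i - 1 → m' j = m j) →
        (∀ j, i ≤ j → j ≤ k + 1 → M ≤ m' j) →
        |maxRootAbs (Ppoly m' k) - maxRootAbs (Rpoly m (i - 1))| < ε := by
  have hp : 1 ≤ i - 1 := by omega
  have hpk : i - 1 ≤ k := by omega
  refine ⟨one_lt_maxRootAbs_Rpoly m hp hm, fun ε hε => ?_⟩
  obtain ⟨M, hupper, hlower, hM⟩ :=
    ((eventually_maxRootAbs_Ppoly_le hp hpk hm (lt_add_of_pos_right _ (half_pos hε))).and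
      ((eventually_lt_maxRootAbs_Ppoly hp hpk hm (sub_lt_self _ hε)).and
        (eventually_ge_atTop 1))).exists
  refine ⟨M, hM, fun m' hagree hbig => ?_⟩
  have hbig' : ∀ j, i - 1 < j → j ≤ k + 1 → M ≤ m' j := fun j hj hj' => hbig j (by omega) hj'
  have h₁ := hupper m' hagree hbig'
  have h₂ := hlower m' hagree hbig'
  rw [abs_sub_lt_iff]
  constructor <;> linarith

/-- Theorem 1.3(2), polynomial form: for fixed `k ≥ 1`, `2 ≤ i ≤ k+1` and fixed
`m_1, …, m_{i-1} ≥ 1`, one has `λ(R_{(m_1,…,m_{i-1})}) > 1` and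
`λ(P_{(m_1,…,m_{k+1})}) → λ(R_{(m_1,…,m_{i-1})})` as `m_i, …, m_{k+1}` all tend
to `∞`. -/
theorem Ppoly_maxRootAbs_tendsto_Rpoly (k i : ℕ) (hk : 1 ≤ k)
    (hi₁ : 2 ≤ i) (hi₂ : i ≤ k + 1) (m : ℕ → ℕ)
    (hm : ∀ j, 1 ≤ j → j ≤ i - 1 → 1 ≤ m j) :
    1 < maxRootAbs (Rpoly m (i - 1)) ∧
    ∀ ε : ℝ, 0 < ε → ∃ M : ℕ, 1 ≤ M ∧
      ∀ m' : ℕ → ℕ, (∀ j, 1 ≤ j → j ≤ i - 1 → m' j = m j) →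
        (∀ j, i ≤ j → j ≤ k + 1 → M ≤ m' j) →
        |maxRootAbs (Ppoly m' k) - maxRootAbs (Rpoly m (i - 1))| < ε :=
  Ppoly_maxRootAbs_tendsto_Rpoly_general k i hi₁ hi₂ m hm
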